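/- arXiv:1703.06162 — 4 statements merged into one kernel-verified Lean document; each statement's English description precedes it below -/
import Mathlib

section
/- With J = e^{-2β} ∈ (0,1) and k ≥ 1, G^{k,0}{x,y} = log(1 − ((J³−J⁴)/(1−J⁴))·J^{3k}), i.e., under the two-site restricted SOS measure, E⁺_{x,y}[e^{−H̄(φ^{-1}[k,∞))}] = 1 − ((J³−J⁴)/(1−J⁴))J^{3k}. -/
/-- Two-site computation at `u = 0`: the reweighted two-site expectation equals
`1 − ((J³−J⁴)/(1−J⁴))·J^{3k}`, i.e. `G^{k,0}{x,y} = log(1 − ((J³−J⁴)/(1−J⁴))J^{3k})`.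
The numerator decomposes over `a = min(φx,φy)` (`< k` with factor 1, `≥ k` with the
two-site correction `(1-J³)/(1-J⁴)`), the denominator being
`Z⁺_{x,y} = (1-J⁴)/((1-J²)²(1-J³))`. -/
theorem stmt9 (β J : ℝ) (hβ : 0 < β) (hJ : J = Real.exp (-2 * β)) (k : ℕ) (hk : 1 ≤ k) :
    ((∑ a ∈ Finset.range k, J ^ (3 * a) * (1 + 2 * ∑' b : ℕ, J ^ (2 * (b + 1))))
        + ((1 - J ^ 3) / (1 - J ^ 4))
          * ∑' a : ℕ, J ^ (3 * (a + k)) * (1 + 2 * ∑' b : ℕ, J ^ (2 * (b + 1))))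
      / ((1 - J ^ 4) / ((1 - J ^ 2) ^ 2 * (1 - J ^ 3)))
      = 1 - ((J ^ 3 - J ^ 4) / (1 - J ^ 4)) * J ^ (3 * k) := by
  have hJ0 : 0 < J := hJ ▸ Real.exp_pos _
  have hJ1 : J < 1 := by
    rw [hJ]
    have : (-2 : ℝ) * β < 0 := by nlinarith
    exact Real.exp_lt_one_iff.mpr this
  have h2 : |J ^ 2| < 1 := by
    rw [abs_of_pos (by positivity)]; nlinarith
  have h3 : |J ^ 3| < 1 := by
    rw [abs_of_pos (by positivity)]; nlinarith
  have hb : (∑' b : ℕ, J ^ (2 * (b + 1))) = J ^ 2 / (1 - J ^ 2) := by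
    have : ∀ b : ℕ, J ^ (2 * (b + 1)) = J ^ 2 * (J ^ 2) ^ b := by
      intro b; rw [pow_mul, pow_succ, mul_comm]
    simp_rw [this]
    rw [tsum_mul_left, tsum_geometric_of_lt_one (by positivity) (by nlinarith),
      div_eq_mul_inv]
  have ha : (∑' a : ℕ, J ^ (3 * (a + k)) * (1 + 2 * (J ^ 2 / (1 - J ^ 2))))
      = J ^ (3 * k) / (1 - J ^ 3) * (1 + 2 * (J ^ 2 / (1 - J ^ 2))) := by
    rw [tsum_mul_right]
    congr 1
    have : ∀ a : ℕ, J ^ (3 * (a + k)) = (J ^ 3) ^ a * J ^ (3 * k) := by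
      intro a; rw [← pow_mul, ← pow_add]; ring_nf
    simp_rw [this]
    rw [tsum_mul_right, tsum_geometric_of_lt_one (by positivity) (by nlinarith)]
    field_simp
  have hs : (∑ a ∈ Finset.range k, J ^ (3 * a) * (1 + 2 * (J ^ 2 / (1 - J ^ 2))))
      = (1 - (J ^ 3) ^ k) / (1 - J ^ 3) * (1 + 2 * (J ^ 2 / (1 - J ^ 2))) := by
    rw [← Finset.sum_mul]
    congr 1
    simp_rw [pow_mul]
    rw [geom_sum_eq (by nlinarith), div_eq_div_iff (by nlinarith) (by nlinarith)]
    ring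
  rw [hb, hs, ha]
  have e2 : 1 - J ^ 2 ≠ 0 := by nlinarith
  have e3 : 1 - J ^ 3 ≠ 0 := by nlinarith
  have e4 : 1 - J ^ 4 ≠ 0 := by
    have := pow_lt_one₀ (le_of_lt hJ0) hJ1 (by norm_num : (4:ℕ) ≠ 0)
    nlinarith
  have hk3 : (J ^ 3) ^ k = J ^ (3 * k) := by rw [← pow_mul]
  rw [hk3]
  field_simp
  ring
end

section
/- Let F(β,u) := max_{n ∈ ℤ≥0} (α₁ J^{2n} u − A J^{3n}) with α₁, A > 0 and J ∈ (0,1). Then there exist constants 0 < c ≤ C (depending on α₁, A, J) such that c·u³ ≤ F(β,u) ≤ C·u³ for all sufficiently small u > 0. -/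
/-!
The term `α₁ x² u − A x³` with `x = Jⁿ` is a cubic in `x` whose maximum over `x ≥ 0` is
`4α₁³u³/(27A²)`, attained at `x = 2α₁u/(3A)`; this gives the upper bound. For the lower bound,
the geometric sequence `Jⁿ` meets every interval `[J t, t]` with `t ≤ 1`, and for `x` in such an
interval with `t = δu`, `δ = α₁J²/(2A)`, the term is at least `α₁³J⁶u³/(8A²)`.
-/

-- Multiplying out, `4a³u³ - 27b²(a x² u - b x³) = (3bx - 2au)² (3bx + au)`.
lemma mul_sq_mul_sub_mul_cube_le {a b u x : ℝ} (ha : 0 ≤ a) (hb : 0 < b) (hu : 0 ≤ u)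
    (hx : 0 ≤ x) : a * x ^ 2 * u - b * x ^ 3 ≤ 4 * a ^ 3 / (27 * b ^ 2) * u ^ 3 := by
  have key : 0 ≤ (3 * b * x - 2 * a * u) ^ 2 * (3 * b * x + a * u) := by positivity
  rw [div_mul_eq_mul_div, le_div_iff₀ (by positivity)]
  nlinarith [key]

lemma mul_sq_mul_sub_mul_cube_le_of_mem_Icc {a b u k t x : ℝ} (ha : 0 ≤ a) (hb : 0 ≤ b)
    (hu : 0 ≤ u) (hk : 0 ≤ k) (ht : 0 ≤ t) (hlo : k * t ≤ x) (hhi : x ≤ t) :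
    a * (k * t) ^ 2 * u - b * t ^ 3 ≤ a * x ^ 2 * u - b * x ^ 3 := by
  have hsq : (k * t) ^ 2 ≤ x ^ 2 := pow_le_pow_left₀ (by positivity) hlo 2
  have hcube : x ^ 3 ≤ t ^ 3 := pow_le_pow_left₀ ((mul_nonneg hk ht).trans hlo) hhi 3
  have := mul_le_mul_of_nonneg_right (mul_le_mul_of_nonneg_left hsq ha) hu
  nlinarith [mul_le_mul_of_nonneg_left hcube hb]

lemma exists_pow_mem_Icc_mul {J t : ℝ} (hJ0 : 0 < J) (hJ1 : J < 1) (ht0 : 0 < t) (ht1 : t ≤ 1) :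
    ∃ n : ℕ, J * t ≤ J ^ n ∧ J ^ n ≤ t := by
  obtain ⟨n, hlt, hle⟩ := exists_nat_pow_near_of_lt_one ht0 ht1 hJ0 hJ1
  exact ⟨n + 1, by rw [pow_succ']; gcongr, hlt.le⟩

/-- Cubic scaling of `F(β,u) = max_{n≥0}(α₁J^{2n}u − AJ^{3n})`: for `J ∈ (0,1)`, `α₁, A > 0`
there are constants `0 < c ≤ C` with `c·u³ ≤ F(β,u) ≤ C·u³` for all sufficiently small `u > 0`. -/
theorem stmt12 (J α₁ A : ℝ) (hJ0 : 0 < J) (hJ1 : J < 1) (hα₁ : 0 < α₁) (hA : 0 < A) :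
    ∃ c C u₀ : ℝ, 0 < c ∧ c ≤ C ∧ 0 < u₀ ∧
      ∀ u : ℝ, 0 < u → u ≤ u₀ →
        c * u ^ 3 ≤ (⨆ n : ℕ, (α₁ * J ^ (2 * n) * u - A * J ^ (3 * n)))
        ∧ (⨆ n : ℕ, (α₁ * J ^ (2 * n) * u - A * J ^ (3 * n))) ≤ C * u ^ 3 := by
  set δ := α₁ * J ^ 2 / (2 * A) with hδ
  have hδ0 : 0 < δ := by positivity
  refine ⟨α₁ ^ 3 * J ^ 6 / (8 * A ^ 2), 4 * α₁ ^ 3 / (27 * A ^ 2), δ⁻¹, by positivity,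
    ?_, by positivity, fun u hu hu₀ => ?_⟩
  · rw [div_le_div_iff₀ (by positivity) (by positivity)]
    have hJ6 : J ^ 6 ≤ 1 := pow_le_one₀ hJ0.le hJ1.le
    have hpos : 0 < α₁ ^ 3 * A ^ 2 := by positivity
    nlinarith [mul_le_mul_of_nonneg_left hJ6 hpos.le]
  have hterm (n : ℕ) : α₁ * J ^ (2 * n) * u - A * J ^ (3 * n) ≤
      4 * α₁ ^ 3 / (27 * A ^ 2) * u ^ 3 := by
    rw [pow_mul', pow_mul']
    exact mul_sq_mul_sub_mul_cube_le hα₁.le hA hu.le (by positivity)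
  have hδu : δ * u ≤ 1 :=
    (mul_le_mul_of_nonneg_left hu₀ hδ0.le).trans_eq (mul_inv_cancel₀ hδ0.ne')
  obtain ⟨n, hlo, hhi⟩ := exists_pow_mem_Icc_mul hJ0 hJ1 (by positivity) hδu
  refine ⟨?_, ciSup_le hterm⟩
  calc α₁ ^ 3 * J ^ 6 / (8 * A ^ 2) * u ^ 3 = α₁ * (J * (δ * u)) ^ 2 * u - A * (δ * u) ^ 3 := by
        rw [hδ]
        field_simp
        ring
    _ ≤ α₁ * (J ^ n) ^ 2 * u - A * (J ^ n) ^ 3 :=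
        mul_sq_mul_sub_mul_cube_le_of_mem_Icc hα₁.le hA.le hu.le hJ0.le (by positivity) hlo hhi
    _ = α₁ * J ^ (2 * n) * u - A * J ^ (3 * n) := by rw [pow_mul', pow_mul']
    _ ≤ ⨆ n : ℕ, (α₁ * J ^ (2 * n) * u - A * J ^ (3 * n)) :=
        le_ciSup ⟨_, Set.forall_mem_range.2 hterm⟩ n
end

section
/- Let h_w(β) := log(e^{4β}/(e^{4β}−1)) and u := h − h_w(β). If the free energy difference satisfies f̄(β,u) = lim_{N→∞} N^{-2} log E_{N,β}[exp(u|φ^{-1}(ℤ≤0)| − H̄(φ^{-1}(ℤ≤0)))] with H̄ ≥ 0, then for all u ≤ 0, f̄(β,u) ≤ 0; combined with monotonicity this yields h_w(β) ≥ log(e^{4β}/(e^{4β}−1)) (Chalker's lower bound). -/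
/-- Nearest-neighbor adjacency in `ℤ²` (ℓ¹ distance 1). -/
def adj (x y : ℤ × ℤ) : Prop := (x.1 - y.1).natAbs + (x.2 - y.2).natAbs = 1

instance (x y : ℤ × ℤ) : Decidable (adj x y) := by unfold adj; infer_instance

/-- The four nearest neighbors of a site of `ℤ²`. -/
def nbrs (x : ℤ × ℤ) : Finset (ℤ × ℤ) :=
  {(x.1 + 1, x.2), (x.1 - 1, x.2), (x.1, x.2 + 1), (x.1, x.2 - 1)}

/-- The SOS Hamiltonian with zero boundary condition on a finite `Λ ⊂ ℤ²`:
`H_Λ(φ) = (1/2)∑_{x,y∈Λ, x∼y}|φ(x)−φ(y)| + ∑_{x∈Λ, y∈∂Λ, x∼y}|φ(x)|`. -/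
noncomputable def sosH (Λ : Finset (ℤ × ℤ)) (φ : ℤ × ℤ → ℤ) : ℝ :=
  (1 / 2 : ℝ) * ∑ x ∈ Λ, ∑ y ∈ Λ, (if adj x y then |(φ x : ℝ) - (φ y : ℝ)| else 0)
    + ∑ x ∈ Λ, ∑ y ∈ nbrs x \ Λ, |(φ x : ℝ)|

/-- Extension of a field on `Λ` by zero outside `Λ`. -/
def extLam (Λ : Finset (ℤ × ℤ)) (φ : {x // x ∈ Λ} → ℤ) : ℤ × ℤ → ℤ :=
  fun x => if h : x ∈ Λ then φ ⟨x, h⟩ else 0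

/-- The SOS partition function `Z_{Λ,β} = ∑_{φ:Λ→ℤ} exp(−βH_Λ(φ))`. -/
noncomputable def Zsos (Λ : Finset (ℤ × ℤ)) (β : ℝ) : ℝ :=
  ∑' φ : {x // x ∈ Λ} → ℤ, Real.exp (-β * sosH Λ (extLam Λ φ))

/-- The restricted (positive) SOS partition function
`Z⁺_{Λ,β} = ∑_{φ:Λ→ℤ≥0} exp(−βH_Λ(φ))`. -/
noncomputable def Zplus (Λ : Finset (ℤ × ℤ)) (β : ℝ) : ℝ :=
  ∑' φ : {x // x ∈ Λ} → ℕ, Real.exp (-β * sosH Λ (extLam Λ (fun x => (φ x : ℤ))))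

/-- The box `⟦1,N⟧² ⊂ ℤ²`. -/
noncomputable def box (N : ℕ) : Finset (ℤ × ℤ) := Finset.Icc 1 (N : ℤ) ×ˢ Finset.Icc 1 (N : ℤ)

/-- The rewritten wetting partition-function ratio
`E_{N,β}[exp(u|φ⁻¹(ℤ≤0)| − H̄(φ⁻¹(ℤ≤0)))]` on the box `⟦1,N⟧²`. -/
noncomputable def Ewet (β u : ℝ) (Hbar : Finset (ℤ × ℤ) → ℝ) (N : ℕ) : ℝ :=
  (∑' φ : {x // x ∈ box N} → ℤ,
      Real.exp (-β * sosH (box N) (extLam (box N) φ)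
        + u * (((box N).filter (fun x => extLam (box N) φ x ≤ 0)).card : ℝ)
        - Hbar ((box N).filter (fun x => extLam (box N) φ x ≤ 0))))
    / Zsos (box N) β

/-- Chalker's lower bound on the wetting critical point: if the excess free energy `f̄(β,u)`
(at `h = log(e^{4β}/(e^{4β}−1)) + u`) is the limit of `N⁻² log E_{N,β}[e^{u|φ⁻¹(ℤ≤0)| −
H̄(φ⁻¹(ℤ≤0))}]` with `H̄ ≥ 0`, then `f̄(β,u) ≤ 0` for all `u ≤ 0`; combined with
nonnegativity and monotonicity this gives `f̄(β,u) = 0` for `u ≤ 0`, i.e.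
`h_w(β) ≥ log(e^{4β}/(e^{4β}−1))`. -/
theorem stmt18 (β : ℝ) (hβ : 0 < β) (Hbar : Finset (ℤ × ℤ) → ℝ) (hHbar : ∀ Γ, 0 ≤ Hbar Γ)
    (fbar : ℝ → ℝ)
    (hlim : ∀ u : ℝ,
      Filter.Tendsto (fun N : ℕ => ((N : ℝ) ^ 2)⁻¹ * Real.log (Ewet β u Hbar N))
        Filter.atTop (nhds (fbar u))) :
    (∀ u : ℝ, u ≤ 0 → fbar u ≤ 0)
    ∧ ((∀ u : ℝ, 0 ≤ fbar u) → Monotone fbar → ∀ u : ℝ, u ≤ 0 → fbar u = 0) := by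
  have key : ∀ u : ℝ, u ≤ 0 → ∀ N : ℕ, 0 ≤ Ewet β u Hbar N ∧ Ewet β u Hbar N ≤ 1 := by
    intro u hu N
    set f : ({x // x ∈ box N} → ℤ) → ℝ := fun φ =>
      Real.exp (-β * sosH (box N) (extLam (box N) φ)
        + u * (((box N).filter (fun x => extLam (box N) φ x ≤ 0)).card : ℝ)
        - Hbar ((box N).filter (fun x => extLam (box N) φ x ≤ 0))) with hf
    set g : ({x // x ∈ box N} → ℤ) → ℝ := fun φ =>
      Real.exp (-β * sosH (box N) (extLam (box N) φ)) with hg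
    have hfg : ∀ φ, f φ ≤ g φ := by
      intro φ
      apply Real.exp_le_exp.mpr
      have h1 : u * (((box N).filter (fun x => extLam (box N) φ x ≤ 0)).card : ℝ) ≤ 0 :=
        mul_nonpos_iff.mpr (Or.inr ⟨hu, Nat.cast_nonneg _⟩)
      have h2 := hHbar ((box N).filter (fun x => extLam (box N) φ x ≤ 0))
      linarith
    have hfnn : ∀ φ, 0 ≤ f φ := fun φ => (Real.exp_pos _).le
    have hZ : Zsos (box N) β = ∑' φ, g φ := rfl
    have hE : Ewet β u Hbar N = (∑' φ, f φ) / (∑' φ, g φ) := rfl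
    by_cases hs : Summable g
    · have hsf : Summable f := hs.of_nonneg_of_le hfnn hfg
      have hZpos : 0 < ∑' φ, g φ :=
        Summable.tsum_pos hs (fun φ => (Real.exp_pos _).le) (fun _ => 0) (Real.exp_pos _)
      constructor
      · rw [hE]
        exact div_nonneg (tsum_nonneg hfnn) hZpos.le
      · rw [hE, div_le_one hZpos]
        exact Summable.tsum_le_tsum hfg hsf hs
    · have : ∑' φ, g φ = 0 := tsum_eq_zero_of_not_summable hs
      rw [hE, this, div_zero]
      exact ⟨le_refl 0, zero_le_one⟩
  have part1 : ∀ u : ℝ, u ≤ 0 → fbar u ≤ 0 := by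
    intro u hu
    refine le_of_tendsto (hlim u) (Filter.Eventually.of_forall ?_)
    intro N
    have h := key u hu N
    have hlog : Real.log (Ewet β u Hbar N) ≤ 0 := Real.log_nonpos h.1 h.2
    exact mul_nonpos_of_nonneg_of_nonpos (inv_nonneg.mpr (by positivity)) hlog
  exact ⟨part1, fun hnn _ u hu => le_antisymm (part1 u hu) (hnn u)⟩
end

section
/- Let φ : Λ → ℤ on a finite Λ ⊂ ℤ², and write φ₊ := max(φ,0), φ₋ := max(−φ,0). Then H_Λ(φ) = H_Λ(φ₊) + H_{φ₊^{-1}{0}}(φ₋|_{φ₊^{-1}{0}}), where the second Hamiltonian is taken on the set where φ₊ vanishes (with zero boundary condition), and φ₋ is supported on that set. -/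
/-!
For integers, `|a - b| = |a⁺ - b⁺| + |a⁻ - b⁻|` (and `|a| = |a⁺| + |a⁻|`), so the Hamiltonian
splits as `H_Λ(φ) = H_Λ(φ₊) + H_Λ(φ₋)`. The field `φ₋` vanishes on `Λ \ S`, where `S = {φ ≤ 0}`:
a bond from `x ∈ S` to `Λ \ S` then costs `|φ₋(x)|`, exactly what it costs as a boundary bond
of `S`, hence `H_Λ(φ₋) = H_S(φ₋)`.
-/

theorem adj_comm (x y : ℤ × ℤ) : adj x y ↔ adj y x := by
  unfold adj; omega

theorem mem_nbrs_iff_adj {x y : ℤ × ℤ} : y ∈ nbrs x ↔ adj x y := by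
  simp only [nbrs, adj, Finset.mem_insert, Finset.mem_singleton, Prod.ext_iff]
  omega

theorem abs_sub_eq_abs_sub_max_add_abs_sub_max {α : Type*} [AddCommGroup α] [LinearOrder α]
    [IsOrderedAddMonoid α] (a b : α) :
    |a - b| = |max a 0 - max b 0| + |max (-a) 0 - max (-b) 0| := by
  rcases le_total a 0 with ha | ha <;> rcases le_total b 0 with hb | hb <;>
    simp only [ha, hb, max_eq_left, max_eq_right, neg_nonneg, neg_nonpos, sub_zero, zero_sub,
      sub_neg_eq_add, neg_add_eq_sub, abs_neg, abs_sub_comm, abs_zero, add_zero, zero_add]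
  · rw [abs_of_nonpos (sub_nonpos.2 (ha.trans hb)), neg_sub, abs_of_nonneg hb,
      abs_of_nonpos ha, sub_eq_add_neg, add_comm]
  · rw [abs_of_nonneg (sub_nonneg.2 (hb.trans ha)), abs_of_nonneg ha, abs_of_nonpos hb,
      sub_eq_add_neg]

section Energy

variable (Λ : Finset (ℤ × ℤ)) (ψ : ℤ × ℤ → ℤ)

noncomputable def bulkEnergy : ℝ :=
  ∑ x ∈ Λ, ∑ y ∈ Λ, if adj x y then |(ψ x : ℝ) - ψ y| else 0

noncomputable def boundaryEnergy : ℝ :=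
  ∑ x ∈ Λ, ∑ _y ∈ nbrs x \ Λ, |(ψ x : ℝ)|

theorem sosH_eq_bulkEnergy_add_boundaryEnergy :
    sosH Λ ψ = 1 / 2 * bulkEnergy Λ ψ + boundaryEnergy Λ ψ := rfl

end Energy

theorem sosH_eq_add_of_abs_sub_eq (Λ : Finset (ℤ × ℤ)) {φ ψ χ : ℤ × ℤ → ℤ}
    (hsub : ∀ x y, |(φ x : ℝ) - φ y| = |(ψ x : ℝ) - ψ y| + |(χ x : ℝ) - χ y|)
    (habs : ∀ x, |(φ x : ℝ)| = |(ψ x : ℝ)| + |(χ x : ℝ)|) :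
    sosH Λ φ = sosH Λ ψ + sosH Λ χ := by
  simp only [sosH, hsub, habs, ite_add_zero, Finset.sum_add_distrib]
  ring

/-- The energy of the bonds from `S` to `Λ \ S`, for fields vanishing on `Λ \ S`. -/
noncomputable def crossEnergy (Λ S : Finset (ℤ × ℤ)) (ψ : ℤ × ℤ → ℤ) : ℝ :=
  ∑ x ∈ S, ∑ y ∈ Λ \ S, if adj x y then |(ψ x : ℝ)| else 0

section Vanishing

variable {Λ S : Finset (ℤ × ℤ)} {ψ : ℤ × ℤ → ℤ}

theorem bulkEnergy_eq_of_vanishing (hS : S ⊆ Λ) (hψ : ∀ x ∈ Λ \ S, ψ x = 0) :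
    bulkEnergy Λ ψ = bulkEnergy S ψ + 2 * crossEnergy Λ S ψ := by
  have hrow (x : ℤ × ℤ) (hx : x ∈ S) :
      ∑ y ∈ Λ, (if adj x y then |(ψ x : ℝ) - ψ y| else 0)
        = ∑ y ∈ S, (if adj x y then |(ψ x : ℝ) - ψ y| else 0)
          + ∑ y ∈ Λ \ S, if adj x y then |(ψ x : ℝ)| else 0 := by
    rw [← Finset.sum_sdiff hS, add_comm]
    congr 1
    refine Finset.sum_congr rfl fun y hy => ?_
    simp [hψ y hy]
  have houter : ∑ x ∈ Λ \ S, ∑ y ∈ Λ, (if adj x y then |(ψ x : ℝ) - ψ y| else 0)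
      = crossEnergy Λ S ψ := by
    rw [Finset.sum_comm, ← Finset.sum_sdiff hS, crossEnergy]
    have hzero : ∑ y ∈ Λ \ S, ∑ x ∈ Λ \ S, (if adj x y then |(ψ x : ℝ) - ψ y| else 0) = 0 :=
      Finset.sum_eq_zero fun y hy => Finset.sum_eq_zero fun x hx => by simp [hψ x hx, hψ y hy]
    rw [hzero, zero_add]
    refine Finset.sum_congr rfl fun y _ => Finset.sum_congr rfl fun x hx => ?_
    simp [hψ x hx, adj_comm x y]
  rw [bulkEnergy, ← Finset.sum_sdiff hS, houter, Finset.sum_congr rfl hrow,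
    Finset.sum_add_distrib, bulkEnergy, crossEnergy]
  ring

theorem sum_nbrs_sdiff_of_subset {M : Type*} [AddCommMonoid M] (hS : S ⊆ Λ) (x : ℤ × ℤ)
    (f : ℤ × ℤ → M) :
    ∑ y ∈ nbrs x \ S, f y = ∑ y ∈ nbrs x \ Λ, f y + ∑ y ∈ Λ \ S, if adj x y then f y else 0 := by
  have hsplit : (nbrs x \ S) \ (nbrs x \ Λ) = {y ∈ Λ \ S | adj x y} := by
    ext y
    simp only [Finset.mem_sdiff, Finset.mem_filter, mem_nbrs_iff_adj]
    tauto
  rw [← Finset.sum_filter, ← hsplit, add_comm,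
    Finset.sum_sdiff (Finset.sdiff_subset_sdiff subset_rfl hS)]

theorem boundaryEnergy_eq_of_vanishing (hS : S ⊆ Λ) (hψ : ∀ x ∈ Λ \ S, ψ x = 0) :
    boundaryEnergy S ψ = boundaryEnergy Λ ψ + crossEnergy Λ S ψ := by
  have hzero : ∑ x ∈ Λ \ S, ∑ _y ∈ nbrs x \ Λ, |(ψ x : ℝ)| = 0 :=
    Finset.sum_eq_zero fun x hx => by simp [hψ x hx]
  rw [boundaryEnergy, boundaryEnergy, ← Finset.sum_sdiff hS, hzero, zero_add, crossEnergy,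
    ← Finset.sum_add_distrib]
  exact Finset.sum_congr rfl fun x _ => sum_nbrs_sdiff_of_subset hS x _

theorem sosH_eq_of_vanishing (hS : S ⊆ Λ) (hψ : ∀ x ∈ Λ \ S, ψ x = 0) :
    sosH Λ ψ = sosH S ψ := by
  rw [sosH_eq_bulkEnergy_add_boundaryEnergy, sosH_eq_bulkEnergy_add_boundaryEnergy,
    bulkEnergy_eq_of_vanishing hS hψ, boundaryEnergy_eq_of_vanishing hS hψ]
  ring

end Vanishing

/-- Decomposition of the SOS Hamiltonian into positive and negative parts:
`H_Λ(φ) = H_Λ(φ₊) + H_{φ₊⁻¹{0}}(φ₋)`, where `φ₊ = max(φ,0)`, `φ₋ = max(−φ,0)` and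
`φ₊⁻¹{0} = {x ∈ Λ : φ(x) ≤ 0}`. -/
theorem stmt19 (Λ : Finset (ℤ × ℤ)) (φ : ℤ × ℤ → ℤ) :
    sosH Λ φ
      = sosH Λ (fun x => max (φ x) 0)
        + sosH (Λ.filter (fun x => φ x ≤ 0)) (fun x => max (-φ x) 0) := by
  have hsplit (a b : ℤ) : |(a : ℝ) - b|
      = |((max a 0 : ℤ) : ℝ) - (max b 0 : ℤ)| + |((max (-a) 0 : ℤ) : ℝ) - (max (-b) 0 : ℤ)| := by
    push_cast
    exact abs_sub_eq_abs_sub_max_add_abs_sub_max (a : ℝ) b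
  rw [sosH_eq_add_of_abs_sub_eq Λ (fun x y => hsplit (φ x) (φ y))
    (fun x => by simpa using hsplit (φ x) 0)]
  congr 1
  refine sosH_eq_of_vanishing (Finset.filter_subset _ _) fun x hx => ?_
  simp only [Finset.mem_sdiff, Finset.mem_filter, not_and, not_le] at hx
  exact max_eq_right (neg_nonpos.2 (hx.2 hx.1).le)
end
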